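/- Let n ≥ 1, let p ≥ 1 be a real number, and let f : [0,1]ⁿ → ℝ satisfy 0 ≤ f(t) ≤ 1 − max_{j=1}^{n} t_j for every t ∈ [0,1]ⁿ. Define δ^f(t)ᵢ = f(t) if i is the (least) index attaining the maximum of the components of t, and 0 otherwise. Then δ^f is minimal for the Gödel t-conorm and the l_p-norm: for every t-conorm boost function δ′ : [0,1]ⁿ → [0,1]ⁿ and every t ∈ [0,1]ⁿ, if ‖δ′(t)‖_p < ‖δ^f(t)‖_p then max_{j=1}^{n} (t_j + δ′(t)_j) < max_{j=1}^{n} (t_j + δ^f(t)_j), where ‖x‖_p = (∑_{k=1}^{n} |x_k|^p)^{1/p}. -/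

import Mathlib

/-- The least index attaining the maximum of the components of `t : Fin (n+1) → ℝ`. -/
noncomputable def argmaxIdx {n : ℕ} (t : Fin (n + 1) → ℝ) : Fin (n + 1) :=
  (Finset.univ.filter (fun i => ∀ j, t j ≤ t i)).min' (by
    obtain ⟨i, -, hi⟩ :=
      Finset.exists_max_image (Finset.univ : Finset (Fin (n + 1))) t ⟨0, Finset.mem_univ 0⟩
    exact ⟨i, Finset.mem_filter.mpr ⟨Finset.mem_univ i, fun j => hi j (Finset.mem_univ j)⟩⟩)

/-- `δ^f(t)ᵢ = f(t)` if `i` is the least index attaining the maximum of the components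
of `t`, and `0` otherwise. -/
noncomputable def deltaF {n : ℕ} (f : (Fin (n + 1) → ℝ) → ℝ)
    (t : Fin (n + 1) → ℝ) (i : Fin (n + 1)) : ℝ :=
  if i = argmaxIdx t then f t else 0

/-- The `l_p`-norm of a vector: `‖x‖_p = (∑ k |x_k|^p)^(1/p)`. -/
noncomputable def lpNorm {n : ℕ} (p : ℝ) (x : Fin (n + 1) → ℝ) : ℝ :=
  (∑ k, |x k| ^ p) ^ (1 / p)

/-! A boost of the Gödel t-conorm `max_j t_j` by `δ` raises it by at most `max_j δ_j`, which is
bounded by any `l_p`-norm of `δ`; `δ^f` puts its whole mass `f(t) = ‖δ^f(t)‖_p` on a maximal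
coordinate and so raises the maximum by exactly that much. -/

lemma le_apply_argmaxIdx {n : ℕ} (t : Fin (n + 1) → ℝ) (j : Fin (n + 1)) :
    t j ≤ t (argmaxIdx t) := by
  unfold argmaxIdx
  exact (Finset.mem_filter.mp (Finset.min'_mem (Finset.univ.filter fun i => ∀ j, t j ≤ t i) _)).2 j

lemma deltaF_eq_single {n : ℕ} (f : (Fin (n + 1) → ℝ) → ℝ) (t : Fin (n + 1) → ℝ) :
    deltaF f t = Pi.single (argmaxIdx t) (f t) := by
  ext i
  simp only [deltaF, Pi.single_apply]

lemma lpNorm_single {n : ℕ} {p : ℝ} (hp : p ≠ 0) (i : Fin (n + 1)) (a : ℝ) :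
    lpNorm p (Pi.single i a) = |a| := by
  rw [lpNorm, Finset.sum_eq_single i (fun k _ hk => by simp [hk, Real.zero_rpow hp]) (by simp),
    Pi.single_eq_same, ← Real.rpow_mul (abs_nonneg a), mul_one_div_cancel hp, Real.rpow_one]

lemma abs_le_lpNorm {n : ℕ} {p : ℝ} (hp : 0 < p) (x : Fin (n + 1) → ℝ) (j : Fin (n + 1)) :
    |x j| ≤ lpNorm p x := by
  have hsingle : |x j| ^ p ≤ ∑ k, |x k| ^ p :=
    Finset.single_le_sum (f := fun k => |x k| ^ p) (fun k _ => by positivity) (Finset.mem_univ j)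
  calc |x j| = (|x j| ^ p) ^ (1 / p) := by
        rw [← Real.rpow_mul (abs_nonneg _), mul_one_div_cancel hp.ne', Real.rpow_one]
    _ ≤ lpNorm p x := Real.rpow_le_rpow (by positivity) hsingle (by positivity)

lemma sup'_add_lt_of_lpNorm_lt {n : ℕ} {p c : ℝ} (hp : 0 < p) (t x : Fin (n + 1) → ℝ)
    (hx : lpNorm p x < c) :
    Finset.univ.sup' Finset.univ_nonempty (fun j => t j + x j) < t (argmaxIdx t) + c := by
  refine (Finset.sup'_lt_iff _).mpr fun j _ => ?_
  have := (le_abs_self (x j)).trans (abs_le_lpNorm hp x j)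
  linarith [le_apply_argmaxIdx t j]

lemma apply_argmaxIdx_add_le_sup'_add_deltaF {n : ℕ} (f : (Fin (n + 1) → ℝ) → ℝ)
    (t : Fin (n + 1) → ℝ) :
    t (argmaxIdx t) + f t ≤
      Finset.univ.sup' Finset.univ_nonempty (fun j => t j + deltaF f t j) := by
  have hdelta : deltaF f t (argmaxIdx t) = f t := if_pos rfl
  simpa only [hdelta] using
    Finset.le_sup' (fun j => t j + deltaF f t j) (Finset.mem_univ (argmaxIdx t))

/-- Minimality of `δ^f` for the Gödel t-conorm and the `l_p`-norm: if
`0 ≤ f(t) ≤ 1 − max_j t_j` on `[0,1]ⁿ`, then for every t-conorm boost function `δ′`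
and every `t ∈ [0,1]ⁿ`, `‖δ′(t)‖_p < ‖δ^f(t)‖_p` implies
`max_j (t_j + δ′(t)_j) < max_j (t_j + δ^f(t)_j)`. -/
theorem deltaF_minimal (n : ℕ) (p : ℝ) (hp : 1 ≤ p)
    (f : (Fin (n + 1) → ℝ) → ℝ)
    (hf : ∀ t : Fin (n + 1) → ℝ, (∀ i, t i ∈ Set.Icc (0 : ℝ) 1) →
      0 ≤ f t ∧ f t ≤ 1 - Finset.univ.sup' Finset.univ_nonempty t) :
    ∀ δ' : (Fin (n + 1) → ℝ) → (Fin (n + 1) → ℝ),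
      (∀ t : Fin (n + 1) → ℝ, (∀ i, t i ∈ Set.Icc (0 : ℝ) 1) →
        ∀ i, δ' t i ∈ Set.Icc (0 : ℝ) 1 ∧ t i + δ' t i ∈ Set.Icc (0 : ℝ) 1) →
      ∀ t : Fin (n + 1) → ℝ, (∀ i, t i ∈ Set.Icc (0 : ℝ) 1) →
        lpNorm p (δ' t) < lpNorm p (deltaF f t) →
        Finset.univ.sup' Finset.univ_nonempty (fun j => t j + δ' t j) <
          Finset.univ.sup' Finset.univ_nonempty (fun j => t j + deltaF f t j) := by
  intro δ' _ t ht hlt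
  have hp0 : 0 < p := zero_lt_one.trans_le hp
  have hnorm : lpNorm p (deltaF f t) = f t := by
    rw [deltaF_eq_single, lpNorm_single hp0.ne', abs_of_nonneg (hf t ht).1]
  rw [hnorm] at hlt
  exact (sup'_add_lt_of_lpNorm_lt hp0 t (δ' t) hlt).trans_le
    (apply_argmaxIdx_add_le_sup'_add_deltaF f t)
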